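/- arXiv:1706.06583 — 2 statements merged into one kernel-verified Lean document; each statement's English description precedes it below -/
import Mathlib

section
/- The metric dimension of any affine plane of order q ≥ 13 is 3q − 4. -/
open Set

/-- The bipartite point-line incidence graph of an incidence relation `I`. -/
def IncGraph {Pt Ln : Type*} (I : Pt → Ln → Prop) : SimpleGraph (Pt ⊕ Ln) where
  Adj x y := (∃ p l, x = Sum.inl p ∧ y = Sum.inr l ∧ I p l) ∨
             (∃ p l, x = Sum.inr l ∧ y = Sum.inl p ∧ I p l)
  symm := by
    constructor
    rintro x y (⟨p, l, hx, hy, h⟩ | ⟨p, l, hx, hy, h⟩)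
    · exact Or.inr ⟨p, l, hy, hx, h⟩
    · exact Or.inl ⟨p, l, hy, hx, h⟩
  loopless := by
    constructor
    rintro x (⟨p, l, hx, hy, h⟩ | ⟨p, l, hx, hy, h⟩) <;> subst hx <;> simp_all

/-- A set of vertices is a resolving set if every vertex is determined
by its distances to the elements of `S`. -/
def IsResolvingSet {V : Type*} (G : SimpleGraph V) (S : Set V) : Prop :=
  ∀ x y : V, (∀ s ∈ S, G.dist x s = G.dist y s) → x = y

/-- An affine plane of order `q`. -/
def IsAffinePlane {Pt Ln : Type*} (q : ℕ) (I : Pt → Ln → Prop) : Prop :=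
  Nat.card Pt = q ^ 2 ∧ Nat.card Ln = q ^ 2 + q ∧
  (∀ l, {p | I p l}.ncard = q) ∧
  (∀ p, {l | I p l}.ncard = q + 1) ∧
  (∀ p₁ p₂ : Pt, p₁ ≠ p₂ → ∃! l, I p₁ l ∧ I p₂ l)

/-!
In the incidence graph two points are at distance 2, a point and a line at distance 1 or 3, and
two lines at distance 2 or 4 according as they meet or are parallel. Hence a set `P ∪ L` of points
and lines is resolving as soon as it is nonempty, the points outside `P` are told apart by their
incidences with `L`, and the lines outside `L` by their incidences with `P` together with their
parallelism to the lines of `L`; conversely these separation properties are necessary.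

For the upper bound fix a point `z`, two lines `t, h₀` through it and a line `t' ≠ t` parallel to
`t`, and take the `q - 1` points of `t` other than `z`, the `q - 2` lines parallel to `t` other
than `t, t'`, and the `q - 1` lines through `z` other than `t, h₀`. A point off `t` is then
recovered from its parallel to `t` and its join with `z`, a line from its parallel class and its
intersection with `t`.

For the lower bound let `p = |P|` and `ℓ = |L|`. A parallel class has at most `p` lines outside `L`
meeting `P` and at most one missing `P`, so each of the `q + 1` classes contains at least
`q - p - 1` lines of `L`; this rules out `p + ℓ < 3q - 4` when `p ≤ q - 3`. At most one point
outside `P` is on no line of `L` and at most `ℓ` are on exactly one, so counting incidences gives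
`2 (q² - p) ≤ ℓ (q + 1) + 2`, which settles `p ≥ q - 1`. If `p = q - 2` this forces `ℓ ≥ 2q - 3`.
If moreover `ℓ = 2q - 3`, every class contains a line of `L`, so few ordered pairs of distinct lines
of `L` are parallel and many share a point; but by the incidence count the numbers `d` of lines of
`L` through the points exceed `2` only by little in total, and convexity of `d ↦ d (d - 1)` then
bounds the number of pairs sharing a point too tightly.
-/

section

open Finset Sum SimpleGraph
open scoped Classical

variable {Pt Ln : Type*}

namespace Finset

lemma sum_mul_sub_one_le {ι : Type*} (s : Finset ι) (f : ι → ℕ) :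
    ∑ i ∈ s, f i * (f i - 1) ≤ (∑ i ∈ s, (f i - 1)) ^ 2 + ∑ i ∈ s, (f i - 1) := by
  have h : ∀ i ∈ s, f i * (f i - 1) = (f i - 1) ^ 2 + (f i - 1) := by
    intro i _
    rcases f i with _ | n
    · rfl
    · rw [Nat.add_sub_cancel]
      ring
  rw [sum_congr rfl h, sum_add_distrib]
  exact Nat.add_le_add_right (sum_sq_le_sq_sum_of_nonneg fun _ _ => Nat.zero_le _) _

lemma sum_sub_one_add_card {ι : Type*} (s : Finset ι) (f : ι → ℕ) :
    ∑ i ∈ s, (f i - 1) + #s = ∑ i ∈ s, f i + #{i ∈ s | f i = 0} := by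
  rw [card_eq_sum_ones, card_filter, ← sum_add_distrib, ← sum_add_distrib]
  refine sum_congr rfl fun i _ => ?_
  split_ifs <;> omega

lemma offDiag_filter {α : Type*} [DecidableEq α] (s : Finset α) (p : α → Prop)
    [DecidablePred p] : {a ∈ s | p a}.offDiag = {e ∈ s.offDiag | p e.1 ∧ p e.2} := by
  ext ⟨a, b⟩
  simp only [mem_offDiag, mem_filter]
  tauto

end Finset

lemma eq_of_forall_ne_iff {α β : Type*} {R : α → β → Prop} {F : β → Prop} {e : β}
    {x y : α} {a b : β} (ha : R x a) (haF : F a) (hb : R y b) (hbF : F b)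
    (hxa : ∀ l, F l → R x l → l = a) (hyb : ∀ l, F l → R y l → l = b)
    (hxy : ∀ l, F l → l ≠ e → (R x l ↔ R y l)) : a = b := by
  by_cases hae : a = e
  · by_cases hbe : b = e
    · rw [hae, hbe]
    · exact (hxa b hbF ((hxy b hbF hbe).mpr hb)).symm
  · exact hyb a haF ((hxy a haF hae).mp ha)

def IsParallel (I : Pt → Ln → Prop) (l m : Ln) : Prop :=
  ∀ p, I p l → I p m → l = m

namespace IsParallel

variable {I : Pt → Ln → Prop} {l m : Ln}

lemma refl (l : Ln) : IsParallel I l l := fun _ _ _ => rfl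

lemma symm (h : IsParallel I l m) : IsParallel I m l := fun p hm hl => (h p hl hm).symm

end IsParallel

lemma isParallel_comm {I : Pt → Ln → Prop} {l m : Ln} : IsParallel I l m ↔ IsParallel I m l :=
  ⟨IsParallel.symm, IsParallel.symm⟩

lemma not_isParallel_iff {I : Pt → Ln → Prop} {l m : Ln} :
    ¬ IsParallel I l m ↔ ∃ p, I p l ∧ I p m ∧ l ≠ m := by
  simp [IsParallel]

section IncGraph

variable {I : Pt → Ln → Prop} {x y : Pt} {l m : Ln}

@[simp] lemma incGraph_adj_inl_inr : (IncGraph I).Adj (inl x) (inr l) ↔ I x l := by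
  simp [IncGraph]

@[simp] lemma incGraph_adj_inr_inl : (IncGraph I).Adj (inr l) (inl x) ↔ I x l := by
  simp [IncGraph]

@[simp] lemma not_incGraph_adj_inl_inl : ¬ (IncGraph I).Adj (inl x) (inl y) := by
  simp [IncGraph]

@[simp] lemma not_incGraph_adj_inr_inr : ¬ (IncGraph I).Adj (inr l) (inr m) := by
  simp [IncGraph]

def incGraphColoring (I : Pt → Ln → Prop) : (IncGraph I).Coloring Bool :=
  Coloring.mk Sum.isLeft fun {u v} h => by
    rcases u with _ | _ <;> rcases v with _ | _ <;> simp_all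

lemma even_incGraph_dist_iff {u v : Pt ⊕ Ln} (h : (IncGraph I).Reachable u v) :
    Even ((IncGraph I).dist u v) ↔ (u.isLeft ↔ v.isLeft) := by
  obtain ⟨w, hw⟩ := h.exists_walk_length_eq_dist
  rw [← hw]
  exact (incGraphColoring I).even_length_iff_congr w

end IncGraph

noncomputable def resolvingSetOfFlag (I : Pt → Ln → Prop) [Fintype Pt] [Fintype Ln] (z : Pt)
    (t h₀ t' : Ln) : Finset (Pt ⊕ Ln) :=
  (({x | I x t} : Finset Pt) \ {z}).disjSum
    ((({l | IsParallel I l t} : Finset Ln) \ {t, t'}) ∪ (({l | I z l} : Finset Ln) \ {t, h₀}))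

section

variable [Fintype Pt] [Fintype Ln] {I : Pt → Ln → Prop} {z : Pt} {t h₀ t' : Ln}

@[simp] lemma inl_mem_resolvingSetOfFlag {x : Pt} :
    inl x ∈ resolvingSetOfFlag I z t h₀ t' ↔ I x t ∧ x ≠ z := by
  simp [resolvingSetOfFlag]

@[simp] lemma inr_mem_resolvingSetOfFlag {l : Ln} : inr l ∈ resolvingSetOfFlag I z t h₀ t' ↔
    (IsParallel I l t ∧ l ≠ t ∧ l ≠ t') ∨ (I z l ∧ l ≠ t ∧ l ≠ h₀) := by
  simp [resolvingSetOfFlag]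

end

namespace IsAffinePlane

variable [Fintype Pt] [Fintype Ln] {q : ℕ} {I : Pt → Ln → Prop} (hA : IsAffinePlane q I)
include hA

/-! ### Playfair's axiom and parallel classes -/

omit [Fintype Ln] in
lemma card_points : Fintype.card Pt = q ^ 2 := by
  rw [← Nat.card_eq_fintype_card, hA.1]

omit [Fintype Ln] in
lemma nonempty_points (hq : 0 < q) : Nonempty Pt :=
  Fintype.card_pos_iff.mp (by rw [hA.card_points]; positivity)

omit [Fintype Ln] in
lemma card_pointsOn (l : Ln) : #{p | I p l} = q := by
  rw [← hA.2.2.1 l, ← Set.ncard_coe_finset, coe_filter_univ]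

omit [Fintype Pt] in
lemma card_linesThrough (p : Pt) : #{l | I p l} = q + 1 := by
  rw [← hA.2.2.2.1 p, ← Set.ncard_coe_finset, coe_filter_univ]

omit [Fintype Pt] [Fintype Ln] in
lemma existsUnique_line {a b : Pt} (hab : a ≠ b) : ∃! l, I a l ∧ I b l :=
  hA.2.2.2.2 a b hab

omit [Fintype Pt] [Fintype Ln] in
lemma eq_of_incident {a b : Pt} {l m : Ln} (hab : a ≠ b) (hal : I a l) (hbl : I b l)
    (ham : I a m) (hbm : I b m) : l = m :=
  (hA.existsUnique_line hab).unique ⟨hal, hbl⟩ ⟨ham, hbm⟩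

lemma exists_incident (l : Ln) : ∃ p, I p l := by
  by_contra! h
  -- for `q = 0` there would be no lines at all
  have hq : q = 0 := by simp [← hA.card_pointsOn l, h]
  have : Nonempty Ln := ⟨l⟩
  have hLn : 0 < Nat.card Ln := Nat.card_pos
  rw [hA.2.1, hq] at hLn
  exact lt_irrefl 0 hLn

lemma order_pos (l : Ln) : 0 < q := by
  obtain ⟨p, hp⟩ := hA.exists_incident l
  exact hA.card_pointsOn l ▸ card_pos.mpr ⟨p, by simpa using hp⟩

omit [Fintype Ln] in
lemma card_common_points {l m : Ln} (hlm : l ≠ m) :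
    #{p | I p l ∧ I p m} = if IsParallel I l m then 0 else 1 := by
  split_ifs with hpar
  · exact card_eq_zero.mpr (filter_eq_empty_iff.mpr fun p _ hp => hlm (hpar p hp.1 hp.2))
  obtain ⟨p, hpl, hpm, -⟩ := not_isParallel_iff.mp hpar
  refine le_antisymm (card_le_one.mpr fun a ha b hb => ?_) (card_pos.mpr ⟨p, by simp [hpl, hpm]⟩)
  by_contra hab
  simp only [mem_filter_univ] at ha hb
  exact hlm (hA.eq_of_incident hab ha.1 hb.1 ha.2 hb.2)

lemma card_parallel_through (x : Pt) (k : Ln) : #{m | I x m ∧ IsParallel I m k} = 1 := by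
  by_cases hxk : I x k
  · refine card_eq_one.mpr ⟨k, ?_⟩
    ext m
    simp only [mem_filter_univ, Finset.mem_singleton]
    exact ⟨fun h => h.2 x h.1 hxk, by rintro rfl; exact ⟨hxk, .refl _⟩⟩
  -- each of the `q` points of `k` is joined to `x` by exactly one line
  have hjoin : ∑ m ∈ ({m | I x m} : Finset Ln), #{y ∈ ({y | I y k} : Finset Pt) | I y m} = q := by
    rw [← hA.card_pointsOn k]
    refine (sum_card_bipartiteAbove_eq_sum_card_bipartiteBelow (fun m y => I y m)).trans ?_
    refine (sum_congr rfl fun y hy => ?_).trans (card_eq_sum_ones _).symm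
    have hxy : x ≠ y := by rintro rfl; simp_all
    rw [bipartiteBelow, filter_filter, ← Fintype.existsUnique_iff_card_one]
    exact hA.existsUnique_line hxy
  have hmeet : #{m ∈ ({m | I x m} : Finset Ln) | ¬ IsParallel I k m} = q := by
    rw [← hjoin, card_filter]
    refine sum_congr rfl fun m hm => ?_
    have hkm : k ≠ m := by rintro rfl; simp_all
    rw [filter_filter, hA.card_common_points hkm, ite_not]
  have hsplit := card_filter_add_card_filter_not (s := ({m | I x m} : Finset Ln)) (IsParallel I k)
  rw [hmeet, hA.card_linesThrough, filter_filter] at hsplit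
  simp only [isParallel_comm (l := k)] at hsplit
  omega

lemma existsUnique_parallel (x : Pt) (k : Ln) : ∃! m, I x m ∧ IsParallel I m k :=
  (Fintype.existsUnique_iff_card_one _).mpr (hA.card_parallel_through x k)

lemma isParallel_trans {a b c : Ln} (hab : IsParallel I a b) (hbc : IsParallel I b c) :
    IsParallel I a c := fun x hxa hxc =>
  (hA.existsUnique_parallel x b).unique ⟨hxa, hab⟩ ⟨hxc, hbc.symm⟩

lemma sum_card_incident_parallel (P : Finset Pt) (k : Ln) :
    ∑ m ∈ ({m | IsParallel I m k} : Finset Ln), #{x ∈ P | I x m} = #P := by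
  refine (sum_card_bipartiteAbove_eq_sum_card_bipartiteBelow (fun x m => I x m)).symm.trans ?_
  refine (sum_congr rfl fun x _ => ?_).trans (card_eq_sum_ones P).symm
  rw [bipartiteAbove, filter_filter, ← hA.card_parallel_through x k]
  simp only [and_comm]

lemma card_parallel (k : Ln) : #{m | IsParallel I m k} = q := by
  have h := hA.sum_card_incident_parallel univ k
  rw [sum_congr rfl fun m _ => hA.card_pointsOn m, sum_const, smul_eq_mul, card_univ,
    hA.card_points, sq] at h
  exact Nat.eq_of_mul_eq_mul_right (hA.order_pos k) h

lemma card_common_points_add_card_parallel_through {l m : Ln} (hlm : l ≠ m) (z : Pt) :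
    #{x | I x l ∧ I x m} + #{k | I z k ∧ IsParallel I l k ∧ IsParallel I m k} = 1 := by
  rw [hA.card_common_points hlm]
  split_ifs with hpar
  · rw [zero_add, ← hA.card_parallel_through z l]
    congr 1
    ext k
    simp only [mem_filter_univ, and_congr_right_iff]
    exact fun _ => ⟨fun h => h.1.symm, fun h => ⟨h.symm, hA.isParallel_trans hpar.symm h.symm⟩⟩
  · rw [card_eq_zero.mpr (filter_eq_empty_iff.mpr fun k _ hk =>
      hpar (hA.isParallel_trans hk.2.1 hk.2.2.symm))]

/-! ### Distances in the incidence graph -/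

omit [Fintype Pt] [Fintype Ln] in
lemma dist_inl_inl (x y : Pt) : (IncGraph I).dist (inl x) (inl y) = if x = y then 0 else 2 := by
  split_ifs with hxy
  · simp [hxy]
  obtain ⟨l, ⟨hxl, hyl⟩, -⟩ := hA.existsUnique_line hxy
  let w : (IncGraph I).Walk (inl x) (inl y) :=
    .cons (incGraph_adj_inl_inr.mpr hxl) (.cons (incGraph_adj_inr_inl.mpr hyl) .nil)
  have hle : (IncGraph I).dist (inl x) (inl y) ≤ 2 := dist_le w
  have hpos := Reachable.pos_dist_of_ne ⟨w⟩ (inl_injective.ne hxy)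
  have heven := (even_incGraph_dist_iff ⟨w⟩).mpr (by simp)
  rw [Nat.even_iff] at heven
  omega

lemma dist_inl_inr (x : Pt) (l : Ln) :
    (IncGraph I).dist (inl x) (inr l) = if I x l then 1 else 3 := by
  split_ifs with hxl
  · exact dist_eq_one_iff_adj.mpr (incGraph_adj_inl_inr.mpr hxl)
  obtain ⟨y, hyl⟩ := hA.exists_incident l
  have hxy : x ≠ y := by rintro rfl; exact hxl hyl
  obtain ⟨m, ⟨hxm, hym⟩, -⟩ := hA.existsUnique_line hxy
  let w : (IncGraph I).Walk (inl x) (inr l) :=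
    .cons (incGraph_adj_inl_inr.mpr hxm)
      (.cons (incGraph_adj_inr_inl.mpr hym) (.cons (incGraph_adj_inl_inr.mpr hyl) .nil))
  have hle : (IncGraph I).dist (inl x) (inr l) ≤ 3 := dist_le w
  have hgt := Reachable.one_lt_dist_of_ne_of_not_adj ⟨w⟩ (by simp) (by simpa using hxl)
  have hodd := (even_incGraph_dist_iff ⟨w⟩).not.mpr (by simp)
  rw [Nat.even_iff] at hodd
  omega

lemma dist_inr_inr (l m : Ln) : (IncGraph I).dist (inr l) (inr m) =
    if l = m then 0 else if IsParallel I l m then 4 else 2 := by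
  split_ifs with hlm hpar
  · simp [hlm]
  · obtain ⟨x, hxl⟩ := hA.exists_incident l
    obtain ⟨y, hym⟩ := hA.exists_incident m
    have hxy : x ≠ y := by rintro rfl; exact hlm (hpar x hxl hym)
    obtain ⟨n, ⟨hxn, hyn⟩, -⟩ := hA.existsUnique_line hxy
    let w : (IncGraph I).Walk (inr l) (inr m) :=
      .cons (incGraph_adj_inr_inl.mpr hxl) (.cons (incGraph_adj_inl_inr.mpr hxn)
        (.cons (incGraph_adj_inr_inl.mpr hyn) (.cons (incGraph_adj_inl_inr.mpr hym) .nil)))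
    have hle : (IncGraph I).dist (inr l) (inr m) ≤ 4 := dist_le w
    have hpos := Reachable.pos_dist_of_ne ⟨w⟩ (inr_injective.ne hlm)
    have heven := (even_incGraph_dist_iff ⟨w⟩).mpr (by simp)
    -- a path of length two would pass through a common point
    have hne2 : (IncGraph I).dist (inr l) (inr m) ≠ 2 := fun h2 => by
      have he : (IncGraph I).edist (inr l) (inr m) = 2 := by
        rw [← Reachable.coe_dist_eq_edist ⟨w⟩, h2]; rfl
      obtain ⟨-, -, v, hv⟩ := edist_eq_two_iff.mp he
      rw [mem_commonNeighbors] at hv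
      rcases v with z | n
      · exact hlm (hpar z (by simpa using hv.1) (by simpa using hv.2))
      · simp at hv
    rw [Nat.even_iff] at heven
    omega
  · obtain ⟨x, hxl, hxm, -⟩ := not_isParallel_iff.mp hpar
    let w : (IncGraph I).Walk (inr l) (inr m) :=
      .cons (incGraph_adj_inr_inl.mpr hxl) (.cons (incGraph_adj_inl_inr.mpr hxm) .nil)
    have hle : (IncGraph I).dist (inr l) (inr m) ≤ 2 := dist_le w
    have hpos := Reachable.pos_dist_of_ne ⟨w⟩ (inr_injective.ne hlm)
    have heven := (even_incGraph_dist_iff ⟨w⟩).mpr (by simp)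
    rw [Nat.even_iff] at heven
    omega

lemma eq_of_dist_eq_zero {u v : Pt ⊕ Ln} (h : (IncGraph I).dist u v = 0) : u = v := by
  rcases u with x | l <;> rcases v with y | m
  · rw [hA.dist_inl_inl] at h
    split_ifs at h with hxy
    exact congrArg inl hxy
  · rw [hA.dist_inl_inr] at h
    split_ifs at h
  · rw [dist_comm, hA.dist_inl_inr] at h
    split_ifs at h
  · rw [hA.dist_inr_inr] at h
    split_ifs at h with hlm
    exact congrArg inr hlm

lemma dist_inl_ne_dist_inr (x : Pt) (l : Ln) (s : Pt ⊕ Ln) :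
    (IncGraph I).dist (inl x) s ≠ (IncGraph I).dist (inr l) s := by
  rcases s with y | m
  · rw [dist_comm (u := inr l), hA.dist_inl_inl, hA.dist_inl_inr]; split_ifs <;> omega
  · rw [hA.dist_inl_inr, hA.dist_inr_inr]; split_ifs <;> omega

/-! ### Resolving sets -/

lemma point_eq_of_isResolvingSet {S : Set (Pt ⊕ Ln)} (hS : IsResolvingSet (IncGraph I) S)
    {x y : Pt} (hx : inl x ∉ S) (hy : inl y ∉ S) (hxy : ∀ l, inr l ∈ S → (I x l ↔ I y l)) :
    x = y := by
  refine inl_injective (hS _ _ ?_)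
  rintro (z | l) hs
  · have hxz : x ≠ z := by rintro rfl; exact hx hs
    have hyz : y ≠ z := by rintro rfl; exact hy hs
    simp [hA.dist_inl_inl, hxz, hyz]
  · simp [hA.dist_inl_inr, hxy l hs]

lemma line_eq_of_isResolvingSet {S : Set (Pt ⊕ Ln)} (hS : IsResolvingSet (IncGraph I) S)
    {m m' : Ln} (hm : inr m ∉ S) (hm' : inr m' ∉ S) (hP : ∀ z, inl z ∈ S → (I z m ↔ I z m'))
    (hL : ∀ l, inr l ∈ S → (IsParallel I l m ↔ IsParallel I l m')) : m = m' := by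
  refine inr_injective (hS _ _ ?_)
  rintro (z | l) hs
  · simp [dist_comm (v := inl z), hA.dist_inl_inr, hP z hs]
  · have hml : m ≠ l := by rintro rfl; exact hm hs
    have hml' : m' ≠ l := by rintro rfl; exact hm' hs
    simp [hA.dist_inr_inr, hml, hml', isParallel_comm (l := m), isParallel_comm (l := m'),
      hL l hs]

lemma isResolvingSet_of {S : Set (Pt ⊕ Ln)} (hne : S.Nonempty)
    (hpts : ∀ x y, inl x ∉ S → inl y ∉ S → (∀ l, inr l ∈ S → (I x l ↔ I y l)) → x = y)
    (hlines : ∀ m m', inr m ∉ S → inr m' ∉ S → (∀ z, inl z ∈ S → (I z m ↔ I z m')) →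
      (∀ l, inr l ∈ S → (IsParallel I l m ↔ IsParallel I l m')) → m = m') :
    IsResolvingSet (IncGraph I) S := by
  intro u v huv
  by_cases hu : u ∈ S
  · exact (hA.eq_of_dist_eq_zero ((huv u hu).symm.trans dist_self)).symm
  by_cases hv : v ∈ S
  · exact hA.eq_of_dist_eq_zero ((huv v hv).trans dist_self)
  obtain ⟨s, hs⟩ := hne
  rcases u with x | m <;> rcases v with y | m'
  · refine congrArg inl (hpts x y hu hv fun l hl => ?_)
    have h := huv _ hl
    simp only [hA.dist_inl_inr] at h
    split_ifs at h <;> simp_all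
  · exact absurd (huv s hs) (hA.dist_inl_ne_dist_inr x m' s)
  · exact absurd (huv s hs).symm (hA.dist_inl_ne_dist_inr y m s)
  · refine congrArg inr (hlines m m' hu hv (fun z hz => ?_) (fun l hl => ?_))
    · have h := huv _ hz
      simp only [dist_comm (v := inl z), hA.dist_inl_inr] at h
      split_ifs at h <;> simp_all
    · have hml : m ≠ l := by rintro rfl; exact hu hl
      have hml' : m' ≠ l := by rintro rfl; exact hv hl
      have h := huv _ hl
      simp only [hA.dist_inr_inr, hml, hml', if_false, isParallel_comm (l := m),
        isParallel_comm (l := m')] at h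
      split_ifs at h <;> simp_all

/-! ### A resolving set of size `3q - 4` -/

section Flag

variable {z : Pt} {t h₀ t' : Ln}

lemma card_resolvingSetOfFlag (hzt : I z t) (hzh : I z h₀) (hth : t ≠ h₀)
    (htt' : IsParallel I t' t) (ht't : t' ≠ t) (hq : 2 ≤ q) :
    #(resolvingSetOfFlag I z t h₀ t') = 3 * q - 4 := by
  have hdisj : Disjoint (({l | IsParallel I l t} : Finset Ln) \ {t, t'})
      (({l | I z l} : Finset Ln) \ {t, h₀}) := by
    refine disjoint_left.mpr fun l hl hl' => ?_
    simp only [Finset.mem_sdiff, mem_filter_univ, Finset.mem_insert, Finset.mem_singleton]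
      at hl hl'
    exact hl.2 (Or.inl (hl.1 z hl'.1 hzt))
  rw [resolvingSetOfFlag, card_disjSum, card_union_of_disjoint hdisj,
    card_sdiff_of_subset (by simp [hzt]),
    card_sdiff_of_subset (by simp [Finset.insert_subset_iff, IsParallel.refl, htt']),
    card_sdiff_of_subset (by simp [Finset.insert_subset_iff, hzt, hzh]), Finset.card_singleton,
    card_pair ht't.symm, card_pair hth, hA.card_pointsOn, hA.card_parallel,
    hA.card_linesThrough]
  omega

lemma center_eq_of_resolvingSetOfFlag (hzt : I z t) (hzh : I z h₀) (hth : t ≠ h₀) (hq : 3 ≤ q)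
    {y : Pt} (hzy : ∀ l, inr l ∈ resolvingSetOfFlag I z t h₀ t' → (I z l ↔ I y l)) : z = y := by
  have h2 : 1 < #(({l | I z l} : Finset Ln) \ {t, h₀}) := by
    rw [card_sdiff_of_subset (by simp [Finset.insert_subset_iff, hzt, hzh]), card_pair hth,
      hA.card_linesThrough]
    omega
  obtain ⟨r₁, hr₁, r₂, hr₂, hr⟩ := one_lt_card.mp h2
  simp only [Finset.mem_sdiff, mem_filter_univ, Finset.mem_insert, Finset.mem_singleton,
    not_or] at hr₁ hr₂
  by_contra hne
  refine hr (hA.eq_of_incident hne hr₁.1 ((hzy r₁ ?_).mp hr₁.1) hr₂.1 ((hzy r₂ ?_).mp hr₂.1))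
  · simp [hr₁.1, hr₁.2.1, hr₁.2.2]
  · simp [hr₂.1, hr₂.2.1, hr₂.2.2]

/-- Off `t`, a point is determined by its parallel to `t` and its join with `z`. -/
lemma point_eq_of_resolvingSetOfFlag_of_not_incident (hzt : I z t) {x y : Pt} (hxt : ¬ I x t)
    (hyt : ¬ I y t) (hxy : ∀ l, inr l ∈ resolvingSetOfFlag I z t h₀ t' → (I x l ↔ I y l)) :
    x = y := by
  have hxz : x ≠ z := by rintro rfl; exact hxt hzt
  have hyz : y ≠ z := by rintro rfl; exact hyt hzt
  obtain ⟨a, ⟨hxa, hat⟩, ha⟩ := hA.existsUnique_parallel x t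
  obtain ⟨b, ⟨hyb, hbt⟩, hb⟩ := hA.existsUnique_parallel y t
  obtain ⟨c, ⟨hxc, hzc⟩, hc⟩ := hA.existsUnique_line hxz
  obtain ⟨d, ⟨hyd, hzd⟩, hd⟩ := hA.existsUnique_line hyz
  have hab : a = b := eq_of_forall_ne_iff (R := I) (F := fun l => IsParallel I l t ∧ l ≠ t)
    (e := t') hxa ⟨hat, by rintro rfl; exact hxt hxa⟩ hyb ⟨hbt, by rintro rfl; exact hyt hyb⟩
    (fun l hl hxl => ha l ⟨hxl, hl.1⟩) (fun l hl hyl => hb l ⟨hyl, hl.1⟩)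
    (fun l hl hlt' => hxy l (by simp [hl.1, hl.2, hlt']))
  have hcd : c = d := eq_of_forall_ne_iff (R := I) (F := fun l => I z l ∧ l ≠ t) (e := h₀)
    hxc ⟨hzc, by rintro rfl; exact hxt hxc⟩ hyd ⟨hzd, by rintro rfl; exact hyt hyd⟩
    (fun l hl hxl => hc l ⟨hxl, hl.1⟩) (fun l hl hyl => hd l ⟨hyl, hl.1⟩)
    (fun l hl hlh => hxy l (by simp [hl.1, hl.2, hlh]))
  subst hab hcd
  by_contra hne
  have hac : a = c := hA.eq_of_incident hne hxa hyb hxc hyd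
  exact hxt (hat z (hac ▸ hzc) hzt ▸ hxa)

lemma point_eq_of_resolvingSetOfFlag (hzt : I z t) (hzh : I z h₀) (hth : t ≠ h₀) (hq : 3 ≤ q)
    {x y : Pt} (hx : inl x ∉ resolvingSetOfFlag I z t h₀ t')
    (hy : inl y ∉ resolvingSetOfFlag I z t h₀ t')
    (hxy : ∀ l, inr l ∈ resolvingSetOfFlag I z t h₀ t' → (I x l ↔ I y l)) : x = y := by
  simp only [inl_mem_resolvingSetOfFlag, not_and_not_right] at hx hy
  by_cases hxz : x = z
  · subst hxz
    exact hA.center_eq_of_resolvingSetOfFlag hzt hzh hth hq hxy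
  by_cases hyz : y = z
  · subst hyz
    exact (hA.center_eq_of_resolvingSetOfFlag hzt hzh hth hq fun l hl => (hxy l hl).symm).symm
  exact hA.point_eq_of_resolvingSetOfFlag_of_not_incident hzt (fun h => hxz (hx h))
    (fun h => hyz (hy h)) hxy

/-- The lines through `z` parallel to `m` and to `m'` coincide; for the class of `t`, which
misses the lines of the set through `z`, a line parallel to `t` in the set takes over. -/
lemma isParallel_of_resolvingSetOfFlag (htt' : IsParallel I t' t) (ht't : t' ≠ t) (hq : 3 ≤ q)
    {m m' : Ln} (hL : ∀ l, inr l ∈ resolvingSetOfFlag I z t h₀ t' →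
      (IsParallel I l m ↔ IsParallel I l m')) : IsParallel I m m' := by
  have h1 : 0 < #(({l | IsParallel I l t} : Finset Ln) \ {t, t'}) := by
    rw [card_sdiff_of_subset (by simp [Finset.insert_subset_iff, IsParallel.refl, htt']),
      card_pair ht't.symm, hA.card_parallel]
    omega
  obtain ⟨l₀, hl₀⟩ := card_pos.mp h1
  simp only [Finset.mem_sdiff, mem_filter_univ, Finset.mem_insert, Finset.mem_singleton,
    not_or] at hl₀
  have ht : ∀ n, IsParallel I t n ↔ IsParallel I l₀ n := fun n =>
    ⟨hA.isParallel_trans hl₀.1, hA.isParallel_trans hl₀.1.symm⟩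
  obtain ⟨r, ⟨hzr, hrm⟩, hr⟩ := hA.existsUnique_parallel z m
  obtain ⟨r', ⟨hzr', hr'm'⟩, hr'⟩ := hA.existsUnique_parallel z m'
  have hrr' : r = r' := eq_of_forall_ne_iff (R := fun n l => IsParallel I l n) (F := (I z))
    (e := h₀) hrm hzr hr'm' hzr' (fun l hl hlm => hr l ⟨hl, hlm⟩)
    (fun l hl hlm => hr' l ⟨hl, hlm⟩) fun l hzl hlh => by
      by_cases hlt : l = t
      · subst hlt
        rw [ht, ht]
        exact hL l₀ (by simp [hl₀.1, hl₀.2.1, hl₀.2.2])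
      · exact hL l (by simp [hzl, hlt, hlh])
  exact hA.isParallel_trans hrm.symm (hrr' ▸ hr'm')

lemma line_eq_of_resolvingSetOfFlag (hzt : I z t) (htt' : IsParallel I t' t) (ht't : t' ≠ t)
    (hq : 3 ≤ q) {m m' : Ln}
    (hm : inr m ∉ resolvingSetOfFlag I z t h₀ t') (hm' : inr m' ∉ resolvingSetOfFlag I z t h₀ t')
    (hP : ∀ x, inl x ∈ resolvingSetOfFlag I z t h₀ t' → (I x m ↔ I x m'))
    (hL : ∀ l, inr l ∈ resolvingSetOfFlag I z t h₀ t' →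
      (IsParallel I l m ↔ IsParallel I l m')) : m = m' := by
  have hpar := hA.isParallel_of_resolvingSetOfFlag htt' ht't hq hL
  simp only [inr_mem_resolvingSetOfFlag, not_or, not_and, not_not] at hm hm'
  by_cases hmt : IsParallel I m t
  · -- then `m, m' ∈ {t, t'}`, and a point of `t` other than `z` tells `t` from `t'`
    obtain ⟨x, hx⟩ := card_pos.mp (by
      rw [card_sdiff_of_subset (by simp [hzt]), Finset.card_singleton, hA.card_pointsOn]
      omega : 0 < #(({x | I x t} : Finset Pt) \ {z}))
    simp only [Finset.mem_sdiff, mem_filter_univ, Finset.mem_singleton] at hx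
    have key : ∀ n, IsParallel I n t → (n ≠ t → n = t') → (I x n ↔ n = t) := by
      intro n hnt hn
      by_cases h : n = t
      · simp [h, hx.1]
      · rw [hn h]
        exact iff_of_false (fun h' => ht't (htt' x h' hx.1)) ht't
    have hm't : IsParallel I m' t := hA.isParallel_trans hpar.symm hmt
    have hiff : m = t ↔ m' = t := (key m hmt (hm.1 hmt)).symm.trans
      ((hP x (by simp [hx.1, hx.2])).trans (key m' hm't (hm'.1 hm't)))
    by_cases h : m = t
    · rw [h, hiff.mp h]
    · rw [hm.1 hmt h, hm'.1 hm't fun h' => h (hiff.mpr h')]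
  -- otherwise `m` and `m'` meet `t`, at most one of them at `z`
  obtain ⟨u, hum, hut, -⟩ := not_isParallel_iff.mp hmt
  by_cases huz : u = z
  · subst huz
    obtain ⟨u', hu'm', hu't, -⟩ :=
      not_isParallel_iff.mp fun h => hmt (hA.isParallel_trans hpar h)
    by_cases hu'z : u' = u
    · exact hpar u hum (hu'z ▸ hu'm')
    · exact hpar u' ((hP u' (by simp [hu't, hu'z])).mpr hu'm') hu'm'
  · exact hpar u hum ((hP u (by simp [hut, huz])).mp hum)

lemma isResolvingSet_resolvingSetOfFlag (hzt : I z t) (hzh : I z h₀) (hth : t ≠ h₀)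
    (htt' : IsParallel I t' t) (ht't : t' ≠ t) (hq : 3 ≤ q) :
    IsResolvingSet (IncGraph I) ↑(resolvingSetOfFlag I z t h₀ t') :=
  hA.isResolvingSet_of
    (card_pos.mp (by rw [hA.card_resolvingSetOfFlag hzt hzh hth htt' ht't (by omega)]; omega))
    (fun _ _ hx hy hxy => hA.point_eq_of_resolvingSetOfFlag hzt hzh hth hq hx hy hxy)
    (fun _ _ hm hm' hP hL => hA.line_eq_of_resolvingSetOfFlag hzt htt' ht't hq hm hm' hP hL)

end Flag

lemma exists_isResolvingSet_card (hq : 3 ≤ q) :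
    ∃ S : Finset (Pt ⊕ Ln), IsResolvingSet (IncGraph I) ↑S ∧ #S = 3 * q - 4 := by
  obtain ⟨z⟩ := hA.nonempty_points (by omega)
  obtain ⟨t, ht, h₀, hh₀, hth⟩ := one_lt_card.mp (by rw [hA.card_linesThrough]; omega :
    1 < #({l | I z l} : Finset Ln))
  obtain ⟨t', ht', ht't⟩ := exists_mem_ne (by rw [hA.card_parallel]; omega :
    1 < #({l | IsParallel I l t} : Finset Ln)) t
  simp only [mem_filter_univ] at ht hh₀ ht'
  exact ⟨_, hA.isResolvingSet_resolvingSetOfFlag ht hh₀ hth ht' ht't hq,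
    hA.card_resolvingSetOfFlag ht hh₀ hth ht' ht't (by omega)⟩

/-! ### The lower bound -/

omit [Fintype Ln] in
lemma sum_card_incident (L : Finset Ln) : ∑ x, #{l ∈ L | I x l} = #L * q := by
  refine (sum_card_bipartiteAbove_eq_sum_card_bipartiteBelow I).trans ?_
  exact (sum_congr rfl fun l _ => hA.card_pointsOn l).trans (sum_const_nat fun _ _ => rfl)

lemma sum_card_parallel_through (z : Pt) (L : Finset Ln) :
    ∑ k ∈ ({k | I z k} : Finset Ln), #{m ∈ L | IsParallel I m k} = #L := by
  refine (sum_card_bipartiteAbove_eq_sum_card_bipartiteBelow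
    (fun m k => IsParallel I m k)).symm.trans ?_
  refine (sum_congr rfl fun m _ => ?_).trans (card_eq_sum_ones L).symm
  rw [bipartiteAbove, filter_filter, ← hA.card_parallel_through z m]
  simp only [isParallel_comm (l := m)]

/-- Two distinct lines of `L` either share exactly one point or lie in a common parallel class,
represented by its line through `z`. -/
lemma sum_card_offDiag_add_sum_card_offDiag (z : Pt) (L : Finset Ln) :
    ∑ x, #({l ∈ L | I x l}.offDiag) +
      ∑ k ∈ ({k | I z k} : Finset Ln), #({m ∈ L | IsParallel I m k}.offDiag) = #L.offDiag := by
  have hpts : ∑ x, #{e ∈ L.offDiag | I x e.1 ∧ I x e.2}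
      = ∑ e ∈ L.offDiag, #{x | I x e.1 ∧ I x e.2} :=
    sum_card_bipartiteAbove_eq_sum_card_bipartiteBelow _
  have hcls : ∑ k ∈ ({k | I z k} : Finset Ln),
      #{e ∈ L.offDiag | IsParallel I e.1 k ∧ IsParallel I e.2 k}
      = ∑ e ∈ L.offDiag, #{k | I z k ∧ IsParallel I e.1 k ∧ IsParallel I e.2 k} :=
    (sum_card_bipartiteAbove_eq_sum_card_bipartiteBelow _).trans
      (by simp only [bipartiteBelow, filter_filter])
  simp only [offDiag_filter]
  rw [hpts, hcls, ← sum_add_distrib, card_eq_sum_ones]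
  exact sum_congr rfl fun e he =>
    hA.card_common_points_add_card_parallel_through (mem_offDiag.mp he).2.2 z

lemma card_parallel_meeting_le (P : Finset Pt) (k : Ln) :
    #{m | IsParallel I m k ∧ ∃ x ∈ P, I x m} ≤ #P := calc
  #{m | IsParallel I m k ∧ ∃ x ∈ P, I x m}
      = ∑ m ∈ ({m | IsParallel I m k ∧ ∃ x ∈ P, I x m} : Finset Ln), 1 := card_eq_sum_ones _
  _ ≤ ∑ m ∈ ({m | IsParallel I m k ∧ ∃ x ∈ P, I x m} : Finset Ln), #{x ∈ P | I x m} :=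
      sum_le_sum fun m hm => by
        obtain ⟨-, x, hx, hxm⟩ := (mem_filter_univ _).mp hm
        exact card_pos.mpr ⟨x, mem_filter.mpr ⟨hx, hxm⟩⟩
  _ ≤ ∑ m ∈ ({m | IsParallel I m k} : Finset Ln), #{x ∈ P | I x m} :=
      sum_le_sum_of_subset fun m hm => by simp_all
  _ = #P := hA.sum_card_incident_parallel P k

section LowerBound

variable {S : Finset (Pt ⊕ Ln)} (hS : IsResolvingSet (IncGraph I) ↑S)
include hS

lemma card_parallel_free_le_one (k : Ln) :
    #{m | IsParallel I m k ∧ inr m ∉ S ∧ ∀ x, inl x ∈ S → ¬ I x m} ≤ 1 :=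
  card_le_one.mpr fun m hm m' hm' => by
    simp only [mem_filter_univ] at hm hm'
    have hmm' : IsParallel I m m' := hA.isParallel_trans hm.1 hm'.1.symm
    exact hA.line_eq_of_isResolvingSet hS hm.2.1 hm'.2.1
      (fun x hx => iff_of_false (hm.2.2 x hx) (hm'.2.2 x hx))
      (fun l _ => ⟨fun h => hA.isParallel_trans h hmm', fun h => hA.isParallel_trans h hmm'.symm⟩)

/-- A parallel class has at most `#S.toLeft` lines outside `S` that meet `S.toLeft`, and
at most one that does not. -/
lemma le_card_parallel_add (k : Ln) :
    q ≤ #{m ∈ S.toRight | IsParallel I m k} + #S.toLeft + 1 := calc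
  q = #{m | IsParallel I m k} := (hA.card_parallel k).symm
  _ ≤ #({m ∈ S.toRight | IsParallel I m k} ∪
      ({m | IsParallel I m k ∧ ∃ x ∈ S.toLeft, I x m} : Finset Ln) ∪
      ({m | IsParallel I m k ∧ inr m ∉ S ∧ ∀ x, inl x ∈ S → ¬ I x m} : Finset Ln)) := by
    refine card_le_card fun m hm => ?_
    simp only [mem_filter_univ] at hm
    simp only [Finset.mem_union, mem_filter, Finset.mem_univ, true_and, mem_toRight, mem_toLeft]
    by_cases hmS : inr m ∈ S
    · exact Or.inl (Or.inl ⟨hmS, hm⟩)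
    by_cases hmP : ∃ x, inl x ∈ S ∧ I x m
    · exact Or.inl (Or.inr ⟨hm, hmP⟩)
    · push Not at hmP
      exact Or.inr ⟨hm, hmS, hmP⟩
  _ ≤ #{m ∈ S.toRight | IsParallel I m k} + #S.toLeft + 1 :=
    (Finset.card_union_le _ _).trans (add_le_add ((Finset.card_union_le _ _).trans
      (add_le_add le_rfl (hA.card_parallel_meeting_le _ k)))
      (hA.card_parallel_free_le_one hS k))

lemma mul_le_card_toRight : (q + 1) * (q - #S.toLeft - 1) ≤ #S.toRight := by
  rcases Nat.eq_zero_or_pos q with rfl | hq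
  · simp
  obtain ⟨z⟩ := hA.nonempty_points hq
  calc (q + 1) * (q - #S.toLeft - 1) = ∑ k ∈ ({k | I z k} : Finset Ln), (q - #S.toLeft - 1) := by
        rw [sum_const, hA.card_linesThrough, smul_eq_mul]
    _ ≤ ∑ k ∈ ({k | I z k} : Finset Ln), #{m ∈ S.toRight | IsParallel I m k} :=
        sum_le_sum fun k _ => by have := hA.le_card_parallel_add hS k; omega
    _ = #S.toRight := hA.sum_card_parallel_through z _

lemma card_trace_eq_zero_le :
    #{x ∈ S.toLeftᶜ | #{l ∈ S.toRight | I x l} = 0} ≤ 1 :=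
  card_le_one.mpr fun x hx y hy => by
    simp only [mem_filter, Finset.mem_compl, mem_toLeft, card_eq_zero, filter_eq_empty_iff,
      mem_toRight] at hx hy
    exact hA.point_eq_of_isResolvingSet hS hx.1 hy.1 fun l hl => iff_of_false (hx.2 hl) (hy.2 hl)

lemma card_trace_le_one_le :
    #{x ∈ S.toLeftᶜ | #{l ∈ S.toRight | I x l} ≤ 1} ≤ #S.toRight + 1 := calc
  _ ≤ #(S.toRight.powersetCard 0 ∪ S.toRight.powersetCard 1) := by
    refine card_le_card_of_injOn (fun x => {l ∈ S.toRight | I x l}) (fun x hx => ?_)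
      (fun x hx y hy hxy => ?_)
    · simp only [coe_filter, Set.mem_ofPred_eq] at hx
      simp only [coe_union, Set.mem_union, mem_coe, mem_powersetCard, filter_subset, true_and]
      omega
    · simp only [coe_filter, Set.mem_ofPred_eq, Finset.mem_compl, mem_toLeft] at hx hy
      refine hA.point_eq_of_isResolvingSet hS hx.1 hy.1 fun l hl => ?_
      simpa [show inr l ∈ S from hl] using congrArg (l ∈ ·) hxy
  _ ≤ #S.toRight + 1 := by
    refine (Finset.card_union_le _ _).trans ?_
    simp only [card_powersetCard, Nat.choose_zero_right, Nat.choose_one_right]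
    omega

lemma sum_add_two_mul_card_compl_le :
    ∑ x ∈ S.toLeft, #{l ∈ S.toRight | I x l} + ∑ x ∈ S.toLeftᶜ, (#{l ∈ S.toRight | I x l} - 2) +
      2 * #S.toLeftᶜ ≤ #S.toRight * q + #S.toRight + 2 := by
  have htot := hA.sum_card_incident S.toRight
  rw [← sum_add_sum_compl S.toLeft] at htot
  have h1 := sum_sub_one_add_card S.toLeftᶜ fun x => #{l ∈ S.toRight | I x l}
  have h2 := sum_sub_one_add_card S.toLeftᶜ fun x => #{l ∈ S.toRight | I x l} - 1
  simp only [Nat.sub_sub, one_add_one_eq_two, Nat.sub_eq_zero_iff_le] at h2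
  have h0 := hA.card_trace_eq_zero_le hS
  have h01 := hA.card_trace_le_one_le hS
  omega

lemma sum_sub_one_add_card_compl_le :
    ∑ x ∈ S.toLeft, #{l ∈ S.toRight | I x l} + ∑ x ∈ S.toLeftᶜ, (#{l ∈ S.toRight | I x l} - 1) +
      #S.toLeftᶜ ≤ #S.toRight * q + 1 := by
  have htot := hA.sum_card_incident S.toRight
  rw [← sum_add_sum_compl S.toLeft] at htot
  have h1 := sum_sub_one_add_card S.toLeftᶜ fun x => #{l ∈ S.toRight | I x l}
  have h0 := hA.card_trace_eq_zero_le hS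
  omega

lemma sum_card_offDiag_incident_le :
    ∑ x, #({l ∈ S.toRight | I x l}.offDiag) + 2 * #S.toLeftᶜ ≤
      (#S.toRight * q + #S.toRight + 2 - 2 * #S.toLeftᶜ) ^ 2 +
        (#S.toRight * q + #S.toRight + 2 - 2 * #S.toLeftᶜ) + 2 * (#S.toRight * q) + 2 := by
  set d : Pt → ℕ := fun x => #{l ∈ S.toRight | I x l}
  simp only [offDiag_card, ← Nat.mul_sub_one]
  rw [← sum_add_sum_compl S.toLeft]
  have hP := sum_mul_sub_one_le S.toLeft d
  have hPd : ∑ x ∈ S.toLeft, (d x - 1) ≤ ∑ x ∈ S.toLeft, d x :=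
    sum_le_sum fun _ _ => Nat.sub_le _ _
  have hO := sum_mul_sub_one_le S.toLeftᶜ fun x => d x - 1
  simp only [Nat.sub_sub, one_add_one_eq_two] at hO
  -- `d (d - 1) = (d - 1) (d - 2) + 2 (d - 1)`, also for `d ≤ 1`
  have hid : ∑ x ∈ S.toLeftᶜ, d x * (d x - 1)
      = ∑ x ∈ S.toLeftᶜ, (d x - 1) * (d x - 2) + 2 * ∑ x ∈ S.toLeftᶜ, (d x - 1) := by
    rw [mul_sum, ← sum_add_distrib]
    refine sum_congr rfl fun x _ => ?_
    rcases d x with _ | _ | n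
    · rfl
    · rfl
    · rw [show n + 1 + 1 - 1 = n + 1 from rfl, show n + 1 + 1 - 2 = n from rfl]
      ring
  have h1 := hA.sum_add_two_mul_card_compl_le hS
  have h2 := hA.sum_sub_one_add_card_compl_le hS
  set Y := ∑ x ∈ S.toLeft, d x
  set E := ∑ x ∈ S.toLeftᶜ, (d x - 2)
  set M := #S.toRight * q + #S.toRight + 2 - 2 * #S.toLeftᶜ
  have hM : Y + E ≤ M := by omega
  have hsq := Nat.pow_le_pow_left hM 2
  have hPsq := Nat.pow_le_pow_left hPd 2
  nlinarith

lemma sum_card_offDiag_parallel_le (hp : #S.toLeft + 2 ≤ q) (z : Pt) :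
    ∑ k ∈ ({k | I z k} : Finset Ln), #({m ∈ S.toRight | IsParallel I m k}.offDiag) ≤
      (#S.toRight - (q + 1)) ^ 2 + (#S.toRight - (q + 1)) := by
  have hB := sum_sub_one_add_card ({k | I z k} : Finset Ln)
    fun k => #{m ∈ S.toRight | IsParallel I m k}
  have h0 : #{k ∈ ({k | I z k} : Finset Ln) | #{m ∈ S.toRight | IsParallel I m k} = 0} = 0 :=
    card_eq_zero.mpr (filter_eq_empty_iff.mpr fun k _ => by
      have := hA.le_card_parallel_add hS k
      omega)
  rw [hA.sum_card_parallel_through, hA.card_linesThrough, h0, add_zero] at hB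
  simp only [offDiag_card, ← Nat.mul_sub_one]
  exact (sum_mul_sub_one_le _ _).trans (by rw [show ∑ k ∈ ({k | I z k} : Finset Ln),
    (#{m ∈ S.toRight | IsParallel I m k} - 1) = #S.toRight - (q + 1) by omega])

lemma two_mul_sub_two_le_card_toRight (hp : #S.toLeft + 2 = q) : 2 * q - 2 ≤ #S.toRight := by
  obtain ⟨z⟩ := hA.nonempty_points (by omega)
  have hO : #S.toLeftᶜ + #S.toLeft = q ^ 2 := by rw [card_compl_add_card, hA.card_points]
  have hpairs := hA.sum_card_offDiag_add_sum_card_offDiag z S.toRight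
  have hT := hA.sum_card_offDiag_incident_le hS
  have hpar := hA.sum_card_offDiag_parallel_le hS hp.le z
  have hcount := hA.sum_add_two_mul_card_compl_le hS
  rw [offDiag_card] at hpairs
  generalize ∑ x, #({l ∈ S.toRight | I x l}.offDiag) = T at hpairs hT
  generalize ∑ k ∈ ({k | I z k} : Finset Ln), #({m ∈ S.toRight | IsParallel I m k}.offDiag)
    = P at hpairs hpar
  generalize ∑ x ∈ S.toLeft, #{l ∈ S.toRight | I x l} +
    ∑ x ∈ S.toLeftᶜ, (#{l ∈ S.toRight | I x l} - 2) = W at hcount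
  generalize #S.toLeftᶜ = o at hO hT hcount
  generalize #S.toRight = ℓ at hpairs hT hpar hcount ⊢
  generalize #S.toLeft = p at hO hp
  by_contra! hℓ
  -- the incidence count leaves only `ℓ = 2q - 3`, and forces `q ≥ 5`
  have hℓ' : 2 * q ≤ ℓ + 3 := by
    by_contra! h
    nlinarith [Nat.mul_le_mul_right (q + 1) (show ℓ + 4 ≤ 2 * q by omega)]
  have hq5 : 5 ≤ q := by
    nlinarith [Nat.mul_le_mul_right q (show ℓ + 3 ≤ 2 * q by omega)]
  obtain ⟨r, rfl⟩ : ∃ r, q = r + 5 := ⟨q - 5, by omega⟩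
  obtain rfl : p = r + 3 := by omega
  obtain rfl : ℓ = 2 * r + 7 := by omega
  obtain rfl : o = r ^ 2 + 9 * r + 22 := by ring_nf at hO; omega
  rw [Nat.sub_eq_of_eq_add (show (2 * r + 7) * (r + 5) + (2 * r + 7) + 2 =
    r + 2 * (r ^ 2 + 9 * r + 22) by ring)] at hT
  rw [show 2 * r + 7 - (r + 5 + 1) = r + 1 by omega] at hpar
  rw [Nat.sub_eq_of_eq_add
    (show (2 * r + 7) * (2 * r + 7) = (2 * r + 7) * (2 * r + 6) + (2 * r + 7) by ring)] at hpairs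
  nlinarith

lemma le_card_of_isResolvingSet : 3 * q - 4 ≤ #S := by
  rw [← card_toLeft_add_card_toRight]
  rcases lt_trichotomy (#S.toLeft + 2) q with hp | hp | hp
  · have h := hA.mul_le_card_toRight hS
    generalize #S.toLeft = p at h hp ⊢
    obtain ⟨s, rfl⟩ : ∃ s, q = p + 3 + s := ⟨q - p - 3, by omega⟩
    rw [show p + 3 + s - p - 1 = s + 2 by omega] at h
    suffices 3 * p + 3 * s + 5 ≤ p + #S.toRight by omega
    nlinarith
  · have := hA.two_mul_sub_two_le_card_toRight hS hp
    omega
  · have h : 2 * #S.toLeftᶜ ≤ #S.toRight * q + #S.toRight + 2 := by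
      have := hA.sum_add_two_mul_card_compl_le hS
      omega
    have hO : #S.toLeftᶜ + #S.toLeft = q ^ 2 := by rw [card_compl_add_card, hA.card_points]
    generalize #S.toLeft = p at h hO hp ⊢
    by_contra! h'
    have hℓ : #S.toRight + p + 5 ≤ 3 * q := by omega
    obtain ⟨r, rfl⟩ : ∃ r, q = r + 1 := ⟨q - 1, by omega⟩
    obtain ⟨s, rfl⟩ : ∃ s, p = r + s := ⟨p - r, by omega⟩
    nlinarith [Nat.mul_le_mul_right (r + 2) hℓ, Nat.zero_le (s * r)]

end LowerBound

end IsAffinePlane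

end

/-- The metric dimension of (the incidence graph of) any affine plane of
order `q ≥ 13` is `3q - 4`: `3q - 4` is the least size of a resolving set. -/
theorem affine_metric_dimension {Pt Ln : Type*} [Fintype Pt] [Fintype Ln]
    (q : ℕ) (hq : 13 ≤ q) (I : Pt → Ln → Prop) (hAP : IsAffinePlane q I) :
    IsLeast {n : ℕ | ∃ S : Set (Pt ⊕ Ln),
      IsResolvingSet (IncGraph I) S ∧ S.ncard = n} (3 * q - 4) := by
  classical
  refine ⟨?_, ?_⟩
  · obtain ⟨S, hS, hcard⟩ := hAP.exists_isResolvingSet_card (by omega)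
    exact ⟨S, hS, by rw [Set.ncard_coe_finset, hcard]⟩
  · rintro n ⟨S, hS, rfl⟩
    rw [Set.ncard_eq_toFinset_card']
    exact hAP.le_card_of_isResolvingSet (by rwa [Set.coe_toFinset])
end

section
/- Let S = P_S ∪ L_S be a resolving set for a biaffine plane of order q, let u be the number of uncovered directions (parallel classes containing no line of L_S) and c the number of unblocked non-adjacency classes (containing no point of P_S). Then |P_S| ≥ (u/(u+1))·2(q−1) and |L_S| ≥ (c/(c+1))·2(q−1). -/
/-!
A line of an uncovered direction is at distance 2 from every line of `L_S` (they meet), and at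
distance 1 or 3 from a point of `P_S` according as they are incident or not. So resolvability
forces such a line to be determined by the points of `P_S` on it: in each uncovered direction at
most one of the `q` parallel lines misses `P_S`, and through each point of `P_S` at most one of
these lines is tangent to `P_S`. Since every point lies on exactly one line of each direction,
counting incidences of `P_S` with these lines gives `2u(q-1) ≤ |P_S|(u+1)`. The bound for `L_S`
is the same bound in the dual plane.
-/

open Set

/-- A biaffine plane of order `q` (an affine plane with one parallel class of lines
removed), together with its partition into `q` parallel classes of lines (given by
`dir`, the direction) and `q` non-adjacency classes of points (given by `cls`):
`q²` points and `q²` lines, each point on `q` lines, each line with `q` points,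
two points on at most one common line; two lines are in the same parallel class iff
they are equal or disjoint; two points are in the same non-adjacency class iff they
are equal or non-collinear; and for every non-incident point-line pair `(p, l)` there
is exactly one line through `p` missing `l` and exactly one point of `l` not
collinear with `p`. -/
def IsBiaffinePlane {Pt Ln : Type*} (q : ℕ) (I : Pt → Ln → Prop)
    (dir : Ln → Fin q) (cls : Pt → Fin q) : Prop :=
  Nat.card Pt = q ^ 2 ∧ Nat.card Ln = q ^ 2 ∧
  (∀ l, {p | I p l}.ncard = q) ∧
  (∀ p, {l | I p l}.ncard = q) ∧
  (∀ p₁ p₂ : Pt, p₁ ≠ p₂ → {l | I p₁ l ∧ I p₂ l}.ncard ≤ 1) ∧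
  (∀ l₁ l₂ : Ln, dir l₁ = dir l₂ ↔ (l₁ = l₂ ∨ ∀ p, ¬ (I p l₁ ∧ I p l₂))) ∧
  (∀ p₁ p₂ : Pt, cls p₁ = cls p₂ ↔ (p₁ = p₂ ∨ ∀ l, ¬ (I p₁ l ∧ I p₂ l))) ∧
  (∀ p l, ¬ I p l →
    (∃! l', I p l' ∧ ∀ p', ¬ (I p' l ∧ I p' l')) ∧
    (∃! p', I p' l ∧ ∀ l', ¬ (I p l' ∧ I p' l')))

namespace SimpleGraph

variable {V W : Type*} {G : SimpleGraph V} {H : SimpleGraph W}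

theorem Hom.edist_le (f : G →g H) (u v : V) : H.edist (f u) (f v) ≤ G.edist u v :=
  le_iInf fun w => (w.map f).edist_le.trans_eq (by simp)

theorem Iso.edist_eq (e : G ≃g H) (u v : V) : H.edist (e u) (e v) = G.edist u v :=
  le_antisymm (e.toHom.edist_le u v) (by simpa using e.symm.toHom.edist_le (e u) (e v))

theorem Iso.dist_eq (e : G ≃g H) (u v : V) : H.dist (e u) (e v) = G.dist u v := by
  simp only [dist, e.edist_eq]

end SimpleGraph

theorem IsResolvingSet.image_iso {V W : Type*} {G : SimpleGraph V} {H : SimpleGraph W}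
    {S : Set V} (hS : IsResolvingSet G S) (e : G ≃g H) : IsResolvingSet H (e '' S) := by
  intro x y hxy
  refine e.symm.injective (hS _ _ fun s hs => ?_)
  rw [← e.dist_eq, ← e.dist_eq (e.symm y)]
  simpa using hxy (e s) ⟨s, hs, rfl⟩

namespace IncGraph

variable {Pt Ln : Type*} {I : Pt → Ln → Prop} {p p' : Pt} {l l' l₁ l₂ : Ln}

@[simp] theorem adj_inl_inr : (IncGraph I).Adj (.inl p) (.inr l) ↔ I p l := by
  simp [IncGraph]

@[simp] theorem adj_inr_inl : (IncGraph I).Adj (.inr l) (.inl p) ↔ I p l := by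
  simp [IncGraph]

@[simp] theorem not_adj_inl_inl : ¬ (IncGraph I).Adj (.inl p) (.inl p') := by
  simp [IncGraph]

@[simp] theorem not_adj_inr_inr : ¬ (IncGraph I).Adj (.inr l₁) (.inr l₂) := by
  simp [IncGraph]

variable (I) in
def bicoloring : (IncGraph I).Coloring Bool :=
  SimpleGraph.Coloring.mk Sum.isLeft <| by rintro (p | l) (p' | l') <;> simp

variable (I) in
def flipIso : IncGraph I ≃g IncGraph (flip I) where
  toEquiv := Equiv.sumComm Pt Ln
  map_rel_iff' := by rintro (p | l) (p' | l') <;> simp [flip]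

theorem dist_inr_inl_of_incident (h : I p l) : (IncGraph I).dist (.inr l) (.inl p) = 1 :=
  SimpleGraph.dist_eq_one_iff_adj.2 (adj_inr_inl.2 h)

theorem dist_inr_inr_of_incident (hne : l₁ ≠ l₂) (h₁ : I p l₁) (h₂ : I p l₂) :
    (IncGraph I).dist (.inr l₁) (.inr l₂) = 2 := by
  let w : (IncGraph I).Walk (.inr l₁) (.inr l₂) :=
    .cons (adj_inr_inl.2 h₁) (.cons (adj_inl_inr.2 h₂) .nil)
  have hlt := w.reachable.one_lt_dist_of_ne_of_not_adj (by simpa using hne) not_adj_inr_inr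
  have hle := SimpleGraph.dist_le w
  simp only [SimpleGraph.Walk.length_cons, SimpleGraph.Walk.length_nil, w] at hle
  omega

theorem dist_inr_inl_of_not_incident (h : ¬ I p l) (h₁ : I p' l) (h₂ : I p' l') (h₃ : I p l') :
    (IncGraph I).dist (.inr l) (.inl p) = 3 := by
  let w : (IncGraph I).Walk (.inr l) (.inl p) :=
    .cons (adj_inr_inl.2 h₁) (.cons (adj_inl_inr.2 h₂) (.cons (adj_inr_inl.2 h₃) .nil))
  have hlt := w.reachable.one_lt_dist_of_ne_of_not_adj (by simp) (by simpa using h)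
  have hle := SimpleGraph.dist_le w
  simp only [SimpleGraph.Walk.length_cons, SimpleGraph.Walk.length_nil, w] at hle
  -- a line and a point have different colours, so every walk between them has odd length
  obtain ⟨w', hw'⟩ := w.reachable.exists_walk_length_eq_dist
  have hodd : ¬ Even w'.length := by
    rw [(bicoloring I).even_length_iff_congr w']
    exact fun h => Bool.false_ne_true (h.2 rfl)
  rw [hw'] at hodd
  have : (IncGraph I).dist (.inr l) (.inl p) ≠ 2 := fun h2 => hodd (h2 ▸ even_two)
  omega

end IncGraph

theorem IsResolvingSet.incGraph_flip {Pt Ln : Type*} {I : Pt → Ln → Prop} {PS : Set Pt}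
    {LS : Set Ln} (h : IsResolvingSet (IncGraph I) (Sum.inl '' PS ∪ Sum.inr '' LS)) :
    IsResolvingSet (IncGraph (flip I)) (Sum.inl '' LS ∪ Sum.inr '' PS) := by
  convert h.image_iso (IncGraph.flipIso I) using 1
  simp [Set.image_union, Set.image_image, IncGraph.flipIso, Set.union_comm]

section Counting

open Finset

variable {A B ι : Type*} [Fintype B] [DecidableEq ι] {I : A → B → Prop}
  [∀ p l, Decidable (I p l)] {dir : B → ι} {P : Finset A} {U : Finset ι} {q : ℕ}

theorem sum_card_incident_eq (hthru : ∀ p ∈ P, ∀ d ∈ U, ∃! l, I p l ∧ dir l = d) :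
    ∑ l ∈ {l | dir l ∈ U}, #{p ∈ P | I p l} = #P * #U := by
  have hdeg : ∀ p ∈ P, #{l | dir l ∈ U ∧ I p l} = #U := by
    intro p hp
    refine card_nbij dir (fun l hl => (mem_filter.1 hl).2.1) ?_ ?_
    · intro l₁ hl₁ l₂ hl₂ hd
      simp only [coe_filter, Finset.mem_univ, true_and, Set.mem_ofPred_eq] at hl₁ hl₂
      exact (hthru p hp _ hl₁.1).unique ⟨hl₁.2, rfl⟩ ⟨hl₂.2, hd.symm⟩
    · intro d hd
      obtain ⟨l, ⟨hpl, rfl⟩, -⟩ := hthru p hp d hd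
      exact ⟨l, by simpa using ⟨hd, hpl⟩, rfl⟩
  calc ∑ l ∈ {l | dir l ∈ U}, #{p ∈ P | I p l}
      = ∑ p ∈ P, #(({l | dir l ∈ U} : Finset B).bipartiteAbove I p) :=
        (sum_card_bipartiteAbove_eq_sum_card_bipartiteBelow I).symm
    _ = #P * #U := by
      simp only [bipartiteAbove, filter_filter]
      rw [sum_congr rfl hdeg, sum_const, smul_eq_mul]

theorem card_tangent_le
    (hsep : ∀ l₁ l₂, dir l₁ ∈ U → dir l₂ ∈ U → (∀ p ∈ P, I p l₁ ↔ I p l₂) → l₁ = l₂) :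
    #{l | dir l ∈ U ∧ #{p ∈ P | I p l} = 1} ≤ #P := by
  have htrace : ∀ l, #{p ∈ P | I p l} = 1 → ∀ p ∈ P, I p l → ∀ p' ∈ P, (I p' l ↔ p' = p) := by
    intro l hl p hp hpl p' hp'
    obtain ⟨a, ha⟩ := card_eq_one.1 hl
    have hmem : ∀ x, x ∈ P ∧ I x l ↔ x = a := by simpa [Finset.ext_iff] using ha
    refine ⟨fun h => ?_, fun h => h ▸ hpl⟩
    rw [(hmem p').1 ⟨hp', h⟩, (hmem p).1 ⟨hp, hpl⟩]
  refine card_le_card_of_forall_subsingleton (fun l p => I p l) (fun l hl => ?_) ?_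
  · obtain ⟨p, hp⟩ := card_eq_one.1 (mem_filter.1 hl).2.2
    exact ⟨p, mem_filter.1 (hp ▸ mem_singleton_self p : p ∈ {p ∈ P | I p l})⟩
  · intro p hp l₁ hl₁ l₂ hl₂
    simp only [mem_filter, Finset.mem_univ, true_and] at hl₁ hl₂
    refine hsep l₁ l₂ hl₁.1.1 hl₂.1.1 fun p' hp' => ?_
    rw [htrace l₁ hl₁.1.2 p hp hl₁.2 p' hp', htrace l₂ hl₂.1.2 p hp hl₂.2 p' hp']

theorem card_mul_le_card_meeting (hfiber : ∀ d ∈ U, #{l | dir l = d} = q)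
    (hsep : ∀ l₁ l₂, dir l₁ ∈ U → dir l₂ ∈ U → (∀ p ∈ P, I p l₁ ↔ I p l₂) → l₁ = l₂) :
    #U * (q - 1) ≤ #{l | dir l ∈ U ∧ 1 ≤ #{p ∈ P | I p l}} := by
  have hdir : ∀ d ∈ U, q - 1 ≤ #{l | dir l = d ∧ 1 ≤ #{p ∈ P | I p l}} := by
    intro d hd
    have hmiss : #{l | dir l = d ∧ ¬ 1 ≤ #{p ∈ P | I p l}} ≤ 1 := by
      refine card_le_one.2 fun l₁ hl₁ l₂ hl₂ => ?_
      simp only [mem_filter, Finset.mem_univ, true_and, not_le, Nat.lt_one_iff, card_eq_zero,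
        filter_eq_empty_iff] at hl₁ hl₂
      exact hsep l₁ l₂ (hl₁.1 ▸ hd) (hl₂.1 ▸ hd) fun p hp => iff_of_false (hl₁.2 hp) (hl₂.2 hp)
    have hsplit := card_filter_add_card_filter_not (s := {l | dir l = d})
      (fun l => 1 ≤ #{p ∈ P | I p l})
    simp only [filter_filter, hfiber d hd] at hsplit
    omega
  calc #U * (q - 1) = ∑ _d ∈ U, (q - 1) := by rw [sum_const, smul_eq_mul]
    _ ≤ ∑ d ∈ U, #{l | dir l = d ∧ 1 ≤ #{p ∈ P | I p l}} := sum_le_sum hdir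
    _ = #{l | dir l ∈ U ∧ 1 ≤ #{p ∈ P | I p l}} := by
      rw [card_eq_sum_card_fiberwise (f := dir) (t := U) (fun l hl => (mem_filter.1 hl).2.1)]
      refine sum_congr rfl fun d hd => congrArg card ?_
      ext l
      simp only [mem_filter, Finset.mem_univ, true_and]
      constructor
      · rintro ⟨rfl, h⟩; exact ⟨⟨hd, h⟩, rfl⟩
      · rintro ⟨⟨-, h⟩, rfl⟩; exact ⟨rfl, h⟩

theorem two_mul_card_mul_le (hfiber : ∀ d ∈ U, #{l | dir l = d} = q)
    (hthru : ∀ p ∈ P, ∀ d ∈ U, ∃! l, I p l ∧ dir l = d)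
    (hsep : ∀ l₁ l₂, dir l₁ ∈ U → dir l₂ ∈ U → (∀ p ∈ P, I p l₁ ↔ I p l₂) → l₁ = l₂) :
    2 * (#U * (q - 1)) ≤ #P * (#U + 1) := by
  -- a line meeting `P` carries at least two of its points unless it is tangent
  have hcount : 2 * #{l | dir l ∈ U ∧ 1 ≤ #{p ∈ P | I p l}} ≤
      ∑ l ∈ {l | dir l ∈ U}, #{p ∈ P | I p l} + #{l | dir l ∈ U ∧ #{p ∈ P | I p l} = 1} := by
    simp only [← filter_filter, card_filter, mul_sum, ← sum_add_distrib]
    exact sum_le_sum fun l _ => by split_ifs <;> omega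
  rw [sum_card_incident_eq hthru] at hcount
  linarith [card_mul_le_card_meeting hfiber hsep, card_tangent_le hsep]

end Counting

namespace IsBiaffinePlane

open Finset

variable {Pt Ln : Type*} {q : ℕ} {I : Pt → Ln → Prop} {dir : Ln → Fin q} {cls : Pt → Fin q}
  {p : Pt} {l₁ l₂ : Ln}

theorem eq_of_incident_of_dir_eq (h : IsBiaffinePlane q I dir cls) (h₁ : I p l₁) (h₂ : I p l₂)
    (hd : dir l₁ = dir l₂) : l₁ = l₂ :=
  ((h.2.2.2.2.2.1 l₁ l₂).1 hd).resolve_right fun hdisj => hdisj p ⟨h₁, h₂⟩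

theorem exists_incident_of_dir_ne (h : IsBiaffinePlane q I dir cls) (hd : dir l₁ ≠ dir l₂) :
    ∃ p, I p l₁ ∧ I p l₂ := by
  by_contra! hdisj
  exact hd ((h.2.2.2.2.2.1 l₁ l₂).2 (Or.inr fun p hp => hdisj p hp.1 hp.2))

theorem existsUnique_incident_dir [Finite Ln] (h : IsBiaffinePlane q I dir cls) (p : Pt)
    (d : Fin q) : ∃! l, I p l ∧ dir l = d := by
  have hinj : Set.InjOn dir {l | I p l} := fun _ h₁ _ h₂ => h.eq_of_incident_of_dir_eq h₁ h₂
  have himage : dir '' {l | I p l} = Set.univ := by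
    refine Set.eq_of_subset_of_ncard_le (Set.subset_univ _) ?_
    rw [hinj.ncard_image, h.2.2.2.1 p, Set.ncard_univ, Nat.card_eq_fintype_card,
      Fintype.card_fin]
  obtain ⟨l, hpl, rfl⟩ : d ∈ dir '' {l | I p l} := himage ▸ Set.mem_univ d
  exact ⟨l, ⟨hpl, rfl⟩, fun l' hl' => h.eq_of_incident_of_dir_eq hl'.1 hpl hl'.2⟩

theorem card_filter_dir_eq [Fintype Pt] [Fintype Ln] (h : IsBiaffinePlane q I dir cls)
    (d : Fin q) : #{l | dir l = d} = q := by
  classical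
  -- the `q` lines of direction `d` partition the `q²` points into sets of size `q`
  have hcount := card_mul_eq_card_mul I (s := univ) (t := {l | dir l = d}) (m := 1) (n := q)
    (fun p _ => ?_) (fun l _ => ?_)
  · rw [card_univ, ← Nat.card_eq_fintype_card, h.1, mul_one, sq] at hcount
    exact (Nat.eq_of_mul_eq_mul_right d.pos hcount).symm
  · obtain ⟨l, hl, huniq⟩ := h.existsUnique_incident_dir p d
    refine card_eq_one.2 ⟨l, ext fun l' => ?_⟩
    simp only [bipartiteAbove, mem_filter, Finset.mem_univ, true_and, Finset.mem_singleton]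
    exact ⟨fun hl' => huniq l' ⟨hl'.2, hl'.1⟩, by rintro rfl; exact ⟨hl.2, hl.1⟩⟩
  · rw [bipartiteBelow, ← h.2.2.1 l, Set.ncard_eq_toFinset_card', Set.toFinset_ofPred]

theorem dist_inr_inl_of_not_incident [Finite Ln] (h : IsBiaffinePlane q I dir cls) (hq : 2 ≤ q)
    {l : Ln} (hpl : ¬ I p l) : (IncGraph I).dist (.inr l) (.inl p) = 3 := by
  -- the line through `p` in any other direction meets `l`
  have : Nontrivial (Fin q) := Fin.nontrivial_iff_two_le.2 hq
  obtain ⟨d, hd⟩ := exists_ne (dir l)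
  obtain ⟨l', ⟨hpl', rfl⟩, -⟩ := h.existsUnique_incident_dir p d
  obtain ⟨p', hp'l, hp'l'⟩ := h.exists_incident_of_dir_ne hd.symm
  exact IncGraph.dist_inr_inl_of_not_incident hpl hp'l hp'l' hpl'

theorem dist_inr_inr_of_dir_ne (h : IsBiaffinePlane q I dir cls) (hd : dir l₁ ≠ dir l₂) :
    (IncGraph I).dist (.inr l₁) (.inr l₂) = 2 := by
  obtain ⟨p, h₁, h₂⟩ := h.exists_incident_of_dir_ne hd
  exact IncGraph.dist_inr_inr_of_incident (fun he => hd (congrArg dir he)) h₁ h₂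

theorem eq_of_forall_incident_iff [Finite Ln] (h : IsBiaffinePlane q I dir cls) (hq : 2 ≤ q)
    {PS : Set Pt} {LS : Set Ln}
    (hres : IsResolvingSet (IncGraph I) (Sum.inl '' PS ∪ Sum.inr '' LS))
    (h₁ : dir l₁ ∈ {d : Fin q | ∀ l ∈ LS, dir l ≠ d})
    (h₂ : dir l₂ ∈ {d : Fin q | ∀ l ∈ LS, dir l ≠ d})
    (hiff : ∀ p ∈ PS, I p l₁ ↔ I p l₂) : l₁ = l₂ := by
  refine Sum.inr_injective (hres _ _ ?_)
  rintro _ (⟨p, hp, rfl⟩ | ⟨l, hl, rfl⟩)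
  · by_cases hpl : I p l₁
    · rw [IncGraph.dist_inr_inl_of_incident hpl,
        IncGraph.dist_inr_inl_of_incident ((hiff p hp).1 hpl)]
    · rw [h.dist_inr_inl_of_not_incident hq hpl,
        h.dist_inr_inl_of_not_incident hq (mt (hiff p hp).2 hpl)]
  · rw [h.dist_inr_inr_of_dir_ne (h₁ l hl).symm, h.dist_inr_inr_of_dir_ne (h₂ l hl).symm]

theorem dual [Finite Pt] [Finite Ln] (h : IsBiaffinePlane q I dir cls) :
    IsBiaffinePlane q (flip I) cls dir := by
  obtain ⟨hPt, hLn, hline, hpt, hmeet, hdir, hcls, hout⟩ := h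
  refine ⟨hLn, hPt, hpt, hline, fun l₁ l₂ hne => ?_, hcls, hdir,
    fun l p hpl => ⟨(hout p l hpl).2, (hout p l hpl).1⟩⟩
  refine (Set.ncard_le_one (Set.toFinite _)).2 fun p₁ hp₁ p₂ hp₂ => ?_
  by_contra hp
  exact hne ((Set.ncard_le_one (Set.toFinite _)).1 (hmeet p₁ p₂ hp) l₁ ⟨hp₁.1, hp₂.1⟩ l₂ ⟨hp₁.2, hp₂.2⟩)

theorem le_ncard_points_of_isResolvingSet [Fintype Pt] [Fintype Ln]
    (h : IsBiaffinePlane q I dir cls) (hq : 2 ≤ q) {PS : Set Pt} {LS : Set Ln}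
    (hres : IsResolvingSet (IncGraph I) (Sum.inl '' PS ∪ Sum.inr '' LS)) :
    (PS.ncard : ℝ) ≥ ({d : Fin q | ∀ l ∈ LS, dir l ≠ d}.ncard /
      ({d : Fin q | ∀ l ∈ LS, dir l ≠ d}.ncard + 1)) * (2 * (q - 1)) := by
  classical
  have key := two_mul_card_mul_le (P := PS.toFinset)
    (U := {d : Fin q | ∀ l ∈ LS, dir l ≠ d}.toFinset) (fun d _ => h.card_filter_dir_eq d)
    (fun p _ d _ => h.existsUnique_incident_dir p d)
    fun l₁ l₂ h₁ h₂ hiff => h.eq_of_forall_incident_iff hq hres (by simpa using h₁)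
      (by simpa using h₂) (by simpa using hiff)
  rw [← Set.ncard_eq_toFinset_card', ← Set.ncard_eq_toFinset_card'] at key
  rw [ge_iff_le, div_mul_eq_mul_div, div_le_iff₀ (by positivity)]
  have hcast := (Nat.cast_le (α := ℝ)).2 key
  push_cast [Nat.cast_sub (by omega : 1 ≤ q)] at hcast
  linarith

end IsBiaffinePlane

/-- Let `S = P_S ∪ L_S` be a resolving set for a biaffine plane of order `q`, let `u` be
the number of uncovered directions (parallel classes containing no line of `L_S`) and `c`
the number of unblocked non-adjacency classes (containing no point of `P_S`). Then
`|P_S| ≥ (u/(u+1))·2(q-1)` and `|L_S| ≥ (c/(c+1))·2(q-1)`. -/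
theorem biaffine_uncovered_bounds {Pt Ln : Type*} [Fintype Pt] [Fintype Ln]
    (q : ℕ) (hq : 2 ≤ q) (I : Pt → Ln → Prop) (dir : Ln → Fin q) (cls : Pt → Fin q)
    (hBA : IsBiaffinePlane q I dir cls)
    (PS : Set Pt) (LS : Set Ln)
    (hres : IsResolvingSet (IncGraph I) (Sum.inl '' PS ∪ Sum.inr '' LS))
    (u c : ℕ)
    (hu : u = {d : Fin q | ∀ l ∈ LS, dir l ≠ d}.ncard)
    (hc : c = {d : Fin q | ∀ p ∈ PS, cls p ≠ d}.ncard) :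
    (PS.ncard : ℝ) ≥ (u / (u + 1)) * (2 * (q - 1)) ∧
    (LS.ncard : ℝ) ≥ (c / (c + 1)) * (2 * (q - 1)) := by
  subst hu hc
  exact ⟨hBA.le_ncard_points_of_isResolvingSet hq hres,
    hBA.dual.le_ncard_points_of_isResolvingSet hq hres.incGraph_flip⟩
end
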